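/- Let 𝕐 ⊆ ℙ^{s−1} be closed in the Zariski topology. Then I(𝕐) is a binomial ideal if and only if 𝕐 ∪ {[0]} is a submonoid of ℙ^{s−1} ∪ {[0]} under componentwise multiplication. -/

import Mathlib

open MvPolynomial

noncomputable section

variable {K : Type} [Field K] {s : ℕ}

def IsBinomialIdeal {σ : Type} (I : Ideal (MvPolynomial σ K)) : Prop :=
  ∃ B : Set (MvPolynomial σ K),
    (∀ f ∈ B, ∃ a b : σ →₀ ℕ, f = monomial a 1 - monomial b 1) ∧ I = Ideal.span B

def affineVanishingIdeal (Y : Set (Fin s → K)) : Ideal (MvPolynomial (Fin s) K) :=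
  Ideal.span {f | ∀ α ∈ Y, eval α f = 0}

def affineZeroSet (I : Ideal (MvPolynomial (Fin s) K)) : Set (Fin s → K) :=
  {α | ∀ f ∈ I, eval α f = 0}

def projVanishingIdeal (Y : Set (Projectivization K (Fin s → K))) :
    Ideal (MvPolynomial (Fin s) K) :=
  Ideal.span {f | (∃ n, f.IsHomogeneous n) ∧
    ∀ (α : Fin s → K) (hα : α ≠ 0), Projectivization.mk K α hα ∈ Y → eval α f = 0}

def projZeroSet (I : Ideal (MvPolynomial (Fin s) K)) :
    Set (Projectivization K (Fin s → K)) :=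
  {p | ∀ f ∈ I, (∃ n, f.IsHomogeneous n) →
    ∀ (α : Fin s → K) (hα : α ≠ 0), Projectivization.mk K α hα = p → eval α f = 0}

def IsProjSubmonoid (Y : Set (Projectivization K (Fin s → K))) : Prop :=
  (∀ h1 : (1 : Fin s → K) ≠ 0, Projectivization.mk K 1 h1 ∈ Y) ∧
  ∀ (α β : Fin s → K) (hα : α ≠ 0) (hβ : β ≠ 0),
    Projectivization.mk K α hα ∈ Y → Projectivization.mk K β hβ ∈ Y →
    ∀ hab : α * β ≠ 0, Projectivization.mk K (α * β) hab ∈ Y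

def projTorus (K : Type) [Field K] (s : ℕ) : Set (Projectivization K (Fin s → K)) :=
  {p | ∀ (α : Fin s → K) (hα : α ≠ 0), Projectivization.mk K α hα = p → ∀ i, α i ≠ 0}

def IsTorusSubgroup (Y : Set (Projectivization K (Fin s → K))) : Prop :=
  Y ⊆ projTorus K s ∧ IsProjSubmonoid Y ∧
  ∀ (α : Fin s → K) (hα : α ≠ 0), Projectivization.mk K α hα ∈ Y →
    ∀ hinv : α⁻¹ ≠ 0, Projectivization.mk K α⁻¹ hinv ∈ Y

def IsLatticeIdeal (I : Ideal (MvPolynomial (Fin s) K)) : Prop :=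
  IsBinomialIdeal I ∧ ∀ (i : Fin s) (f : MvPolynomial (Fin s) K), X i * f ∈ I → f ∈ I

def IsGradedIdeal {σ : Type} (I : Ideal (MvPolynomial σ K)) : Prop :=
  ∀ f ∈ I, ∀ n, homogeneousComponent n f ∈ I

/-!
A binomial `x^a - x^b` vanishes at `x` exactly when the monomial characters `x ↦ x^a` and
`x ↦ x^b` agree there, so the affine zero locus of a binomial ideal is a multiplicative monoid
containing `1`; since `𝕐` is closed, `𝕐 = V(I(𝕐))` inherits this.

Conversely, suppose the affine cone `M` over `𝕐` is a monoid and let `f` be homogeneous and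
vanish on `𝕐`, hence on `M`. If two monomials of `f` define the same character of `M`, subtracting
a multiple of their binomial (which lies in `I(𝕐)`) shortens `f`. Otherwise the monomials of `f`
restrict to pairwise distinct characters `M →* K`, which are linearly independent by Dedekind's
lemma, so `f = 0`.
-/

namespace MvPolynomial

variable {σ R : Type*}

section CommSemiring

variable [CommSemiring R]

def monomialChar (a : σ →₀ ℕ) : (σ → R) →* R where
  toFun x := a.prod fun i e => x i ^ e
  map_one' := by simp [Finsupp.prod]
  map_mul' x y := by simp [Finsupp.prod, mul_pow, Finset.prod_mul_distrib]

theorem eval_monomial_one (a : σ →₀ ℕ) (x : σ → R) :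
    eval x (monomial a 1) = monomialChar a x := by
  simp [eval_monomial, monomialChar]

theorem eval_eq_sum_monomialChar (x : σ → R) (f : MvPolynomial σ R) :
    eval x f = ∑ a ∈ f.support, coeff a f * monomialChar a x :=
  rfl

theorem monomialChar_smul (a : σ →₀ ℕ) (c : R) (x : σ → R) :
    monomialChar a (c • x) = c ^ a.degree * monomialChar a x := by
  simp [monomialChar, Finsupp.prod, mul_pow, Finset.prod_mul_distrib,
    Finset.prod_pow_eq_pow_sum, Finsupp.degree_apply]

theorem IsHomogeneous.degree_eq_of_mem_support {f : MvPolynomial σ R} {n : ℕ}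
    (hf : f.IsHomogeneous n) {a : σ →₀ ℕ} (ha : a ∈ f.support) : a.degree = n := by
  rw [Finsupp.degree_apply, hf.degree_eq_sum_deg_support ha]

theorem IsHomogeneous.eval_smul {f : MvPolynomial σ R} {n : ℕ} (hf : f.IsHomogeneous n)
    (c : R) (x : σ → R) : eval (c • x) f = c ^ n * eval x f := by
  simp only [eval_eq_sum_monomialChar, monomialChar_smul, Finset.mul_sum]
  refine Finset.sum_congr rfl fun a ha => ?_
  rw [hf.degree_eq_of_mem_support ha, mul_left_comm]

end CommSemiring

section CommRing

variable [CommRing R]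

theorem support_sub_C_mul_binomial_subset [DecidableEq (σ →₀ ℕ)] (f : MvPolynomial σ R)
    {a b : σ →₀ ℕ} (hab : a ≠ b) (hb : b ∈ f.support) :
    (f - C (coeff a f) * (monomial a 1 - monomial b 1)).support ⊆ f.support.erase a := by
  classical
  intro d hd
  rw [mem_support_iff] at hd
  rw [Finset.mem_erase]
  obtain rfl | hda := eq_or_ne d a
  · simp [coeff_monomial, hab.symm] at hd
  refine ⟨hda, ?_⟩
  obtain rfl | hdb := eq_or_ne d b
  · exact hb
  · simpa [coeff_monomial, hda.symm, hdb.symm] using hd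

variable [IsDomain R]

theorem eq_zero_of_forall_eval_eq_zero_of_injOn (M : Submonoid (σ → R)) {f : MvPolynomial σ R}
    (hf : ∀ x ∈ M, eval x f = 0)
    (hinj : Set.InjOn (fun a => (monomialChar a).comp M.subtype) f.support) : f = 0 := by
  have hli := ((linearIndependent_monoidHom M R).linearIndepOn _).comp_of_image hinj
  have hsum : ∑ a ∈ f.support, coeff a f • ⇑((monomialChar a).comp M.subtype) = 0 := by
    funext x
    simpa [eval_eq_sum_monomialChar] using hf x x.2
  ext a
  by_cases ha : a ∈ f.support
  · exact linearIndepOn_finset_iff.mp hli _ hsum a ha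
  · exact notMem_support_iff.mp ha

theorem mem_span_binomials_of_forall_eval_eq_zero (M : Submonoid (σ → R)) (D : Set (σ →₀ ℕ))
    {f : MvPolynomial σ R} (hfD : ↑f.support ⊆ D) (hf : ∀ x ∈ M, eval x f = 0) :
    f ∈ Ideal.span {g | ∃ a ∈ D, ∃ b ∈ D,
      g = monomial a 1 - monomial b 1 ∧ ∀ x ∈ M, eval x g = 0} := by
  classical
  induction hn : f.support.card using Nat.strong_induction_on generalizing f with
  | _ n ih =>
  by_cases hinj : Set.InjOn (fun a => (monomialChar a).comp M.subtype) f.support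
  · rw [eq_zero_of_forall_eval_eq_zero_of_injOn M hf hinj]
    exact zero_mem _
  obtain ⟨a, ha, b, hb, hχ, hab⟩ : ∃ a ∈ f.support, ∃ b ∈ f.support,
      (monomialChar a).comp M.subtype = (monomialChar b).comp M.subtype ∧ a ≠ b := by
    simpa [Set.InjOn] using hinj
  set g : MvPolynomial σ R := monomial a 1 - monomial b 1
  have hg : ∀ x ∈ M, eval x g = 0 := fun x hx => by
    simpa [g, eval_monomial_one, sub_eq_zero] using DFunLike.congr_fun hχ ⟨x, hx⟩
  have hsupp := support_sub_C_mul_binomial_subset f hab hb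
  have hrest := ih _ (hn ▸ (Finset.card_le_card hsupp).trans_lt (Finset.card_erase_lt_of_mem ha))
    (subset_trans (by exact_mod_cast hsupp.trans (Finset.erase_subset a _)) hfD)
    (fun x hx => by simp [g, hf x hx, hg x hx]) rfl
  simpa using add_mem hrest
    (Ideal.mul_mem_left _ (C (coeff a f)) (Ideal.subset_span ⟨a, hfD ha, b, hfD hb, rfl, hg⟩))

end CommRing

end MvPolynomial

def IsBinomialIdeal.zeroLocusSubmonoid {σ : Type} {I : Ideal (MvPolynomial σ K)}
    (hI : IsBinomialIdeal I) : Submonoid (σ → K) where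
  carrier := zeroLocus K I
  one_mem' := by
    obtain ⟨B, hB, rfl⟩ := hI
    rw [zeroLocus_span]
    intro g hg
    obtain ⟨a, b, rfl⟩ := hB g hg
    simp [aeval_eq_eval, eval_monomial_one]
  mul_mem' {x y} hx hy := by
    obtain ⟨B, hB, rfl⟩ := hI
    rw [zeroLocus_span] at hx hy ⊢
    intro g hg
    obtain ⟨a, b, rfl⟩ := hB g hg
    have hxg := hx _ hg
    have hyg := hy _ hg
    simp only [aeval_eq_eval, map_sub, eval_monomial_one, sub_eq_zero] at hxg hyg ⊢
    rw [map_mul, map_mul, hxg, hyg]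

theorem mem_zeroLocus_projVanishingIdeal {Y : Set (Projectivization K (Fin s → K))}
    {α : Fin s → K} (hα : α ≠ 0) (hαY : Projectivization.mk K α hα ∈ Y) :
    α ∈ zeroLocus K (projVanishingIdeal Y) := by
  rw [projVanishingIdeal, zeroLocus_span]
  exact fun f hf => hf.2 α hα hαY

theorem mk_mem_projZeroSet_of_mem_zeroLocus {I : Ideal (MvPolynomial (Fin s) K)}
    {x : Fin s → K} (hx : x ≠ 0) (hxI : x ∈ zeroLocus K I) :
    Projectivization.mk K x hx ∈ projZeroSet I := by
  rintro f hf ⟨n, hn⟩ α hα hαx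
  obtain ⟨c, rfl⟩ := (Projectivization.mk_eq_mk_iff K α x hα hx).mp hαx
  rw [Units.smul_def, hn.eval_smul, ← aeval_eq_eval, hxI f hf, mul_zero]

theorem projZeroSet_projVanishingIdeal_projZeroSet (J : Ideal (MvPolynomial (Fin s) K)) :
    projZeroSet (projVanishingIdeal (projZeroSet J)) = projZeroSet J := by
  ext p
  constructor
  · intro hp f hf hfh
    exact hp f (Ideal.subset_span ⟨hfh, fun α hα hαp => hαp f hf hfh α hα rfl⟩) hfh
  · rintro hp f hf - α hα rfl
    exact mem_zeroLocus_projVanishingIdeal hα hp f hf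

-- The vertex `0` belongs to the cone vacuously; this is the `[0]` adjoined to `𝕐`.
def affineCone {V : Type*} [AddCommGroup V] [Module K V] (Y : Set (Projectivization K V)) :
    Set V :=
  {v | ∀ hv : v ≠ 0, Projectivization.mk K v hv ∈ Y}

def IsProjSubmonoid.affineConeSubmonoid {Y : Set (Projectivization K (Fin s → K))}
    (hY : IsProjSubmonoid Y) : Submonoid (Fin s → K) where
  carrier := affineCone Y
  one_mem' := hY.1
  mul_mem' {α β} hα hβ hαβ :=
    hY.2 α β (left_ne_zero_of_mul hαβ) (right_ne_zero_of_mul hαβ) (hα _) (hβ _) hαβ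

theorem MvPolynomial.IsHomogeneous.eval_eq_zero_of_mem_affineCone
    {Y : Set (Projectivization K (Fin s → K))} (hY : Y.Nonempty) {f : MvPolynomial (Fin s) K}
    {n : ℕ} (hf : f.IsHomogeneous n)
    (hfY : ∀ (α : Fin s → K) (hα : α ≠ 0), Projectivization.mk K α hα ∈ Y → eval α f = 0)
    {x : Fin s → K} (hx : x ∈ affineCone Y) : eval x f = 0 := by
  obtain rfl | hx0 := eq_or_ne x 0
  · obtain ⟨p, hp⟩ := hY
    rw [← zero_smul K p.rep, hf.eval_smul, hfY p.rep p.rep_nonzero (by rwa [p.mk_rep]), mul_zero]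
  · exact hfY x hx0 (hx hx0)

theorem isProjSubmonoid_of_isBinomialIdeal {Y : Set (Projectivization K (Fin s → K))}
    (hYY : projZeroSet (projVanishingIdeal Y) = Y) (hI : IsBinomialIdeal (projVanishingIdeal Y)) :
    IsProjSubmonoid Y := by
  let M := hI.zeroLocusSubmonoid
  refine ⟨fun h1 => hYY ▸ mk_mem_projZeroSet_of_mem_zeroLocus h1 M.one_mem,
    fun α β hα hβ hαY hβY hαβ => hYY ▸ mk_mem_projZeroSet_of_mem_zeroLocus hαβ
      (M.mul_mem (mem_zeroLocus_projVanishingIdeal hα hαY)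
        (mem_zeroLocus_projVanishingIdeal hβ hβY))⟩

theorem IsProjSubmonoid.isBinomialIdeal {Y : Set (Projectivization K (Fin s → K))}
    (hY : IsProjSubmonoid Y) (hYne : Y.Nonempty) : IsBinomialIdeal (projVanishingIdeal Y) := by
  refine ⟨{g | (∃ a b, g = monomial a 1 - monomial b 1) ∧ g ∈ projVanishingIdeal Y},
    fun g hg => hg.1, le_antisymm ?_ (Ideal.span_le.mpr fun g hg => hg.2)⟩
  refine Ideal.span_le.mpr fun f ⟨⟨n, hn⟩, hfY⟩ => Ideal.span_mono ?_
    (mem_span_binomials_of_forall_eval_eq_zero hY.affineConeSubmonoid f.support subset_rfl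
      fun x hx => hn.eval_eq_zero_of_mem_affineCone hYne hfY hx)
  rintro g ⟨a, ha, b, hb, rfl, hg⟩
  have hgn : (monomial a (1 : K) - monomial b 1).IsHomogeneous n :=
    (isHomogeneous_monomial _ (hn.degree_eq_of_mem_support ha)).sub
      (isHomogeneous_monomial _ (hn.degree_eq_of_mem_support hb))
  exact ⟨⟨a, b, rfl⟩, Ideal.subset_span ⟨⟨n, hgn⟩, fun α hα hαY => hg α fun _ => hαY⟩⟩

theorem closed_binomial_iff_monoid (hs : 0 < s)
    (Y : Set (Projectivization K (Fin s → K)))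
    (hclosed : ∃ J : Ideal (MvPolynomial (Fin s) K), IsGradedIdeal J ∧ Y = projZeroSet J) :
    IsBinomialIdeal (projVanishingIdeal Y) ↔ IsProjSubmonoid Y := by
  obtain ⟨J, -, hYJ⟩ := hclosed
  have hYY : projZeroSet (projVanishingIdeal Y) = Y :=
    hYJ ▸ projZeroSet_projVanishingIdeal_projZeroSet J
  refine ⟨isProjSubmonoid_of_isBinomialIdeal hYY, fun hY => hY.isBinomialIdeal ?_⟩
  have h1 : (1 : Fin s → K) ≠ 0 := fun h => one_ne_zero (congrFun h ⟨0, hs⟩)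
  exact ⟨_, hY.1 h1⟩
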